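/- arXiv:2207.09435 — 4 statements merged into one kernel-verified Lean document; each statement's English description precedes it below -/
import Mathlib

section
/- Consider the binary case where A₁ is uniform on {-1, 1} and the algorithm Alg' picks item 1 with probability min((s₁+1)/2, 1) upon observing s₁ = v₁ + a₁. Then for every v₁ ∈ ℝ, the regret max(v₁,0) - E[Alg' value] is at most 1/4. Specifically: if v₁ ≥ 2 the regret is 0; if v₁ ∈ [0,2) the regret is (1/2)·v₁·(1 - v₁/2) ≤ 1/4; and symmetrically if v₁ < 0 the regret is at most 1/4. -/
/-!
The clipped probability `p s = max 0 (min ((s + 1) / 2) 1)` satisfies `p (-s) = 1 - p s`, so the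
regret is an even function of `v` and it suffices to treat `v ≥ 0`. There item 1 is the right
choice and is missed with probability `1 - v / 2` when `v - 1` is observed, giving regret
`(v / 2) (1 - v / 2) ≤ 1 / 4` for `v ≤ 2`, and regret `0` once both observations are `≥ 1`.
-/

namespace RandomizedBinary

noncomputable def pickProb (s : ℝ) : ℝ := max 0 (min ((s + 1) / 2) 1)

noncomputable def regret (v : ℝ) : ℝ :=
  max v 0 - v * ((pickProb (v - 1) + pickProb (v + 1)) / 2)

lemma clip_one_sub (x : ℝ) : max 0 (min (1 - x) 1) = 1 - max 0 (min x 1) := by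
  simp only [max_def, min_def]
  split_ifs <;> linarith

lemma pickProb_neg (s : ℝ) : pickProb (-s) = 1 - pickProb s := by
  rw [pickProb, pickProb, ← clip_one_sub]
  ring_nf

lemma regret_neg (v : ℝ) : regret (-v) = regret v := by
  have hsub : pickProb (-v - 1) = 1 - pickProb (v + 1) := by rw [← pickProb_neg]; ring_nf
  have hadd : pickProb (-v + 1) = 1 - pickProb (v - 1) := by rw [← pickProb_neg]; ring_nf
  rw [regret, regret, hsub, hadd]
  linarith [max_zero_sub_max_neg_zero_eq_self v]

lemma pickProb_of_one_le {s : ℝ} (hs : 1 ≤ s) : pickProb s = 1 := by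
  rw [pickProb, min_eq_right (by linarith), max_eq_right zero_le_one]

lemma pickProb_of_mem_Icc {s : ℝ} (h₀ : -1 ≤ s) (h₁ : s ≤ 1) : pickProb s = (s + 1) / 2 := by
  rw [pickProb, min_eq_left (by linarith), max_eq_right (by linarith)]

lemma regret_of_two_le {v : ℝ} (hv : 2 ≤ v) : regret v = 0 := by
  rw [regret, pickProb_of_one_le (by linarith), pickProb_of_one_le (by linarith),
    max_eq_left (by linarith)]
  ring

lemma regret_of_mem_Icc {v : ℝ} (h₀ : 0 ≤ v) (h₂ : v ≤ 2) :
    regret v = v / 2 * (1 - v / 2) := by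
  rw [regret, pickProb_of_mem_Icc (by linarith) (by linarith), pickProb_of_one_le (by linarith),
    max_eq_left h₀]
  ring

lemma regret_le_quarter (v : ℝ) : regret v ≤ 1 / 4 := by
  wlog hv : 0 ≤ v generalizing v
  · simpa [regret_neg] using this (-v) (by linarith)
  rcases le_total v 2 with h₂ | h₂
  · rw [regret_of_mem_Icc hv h₂]
    nlinarith [sq_nonneg (v - 1)]
  · rw [regret_of_two_le h₂]
    norm_num

end RandomizedBinary

/-- The randomized binary algorithm which picks item 1 with probability
`min ((s+1)/2, 1)` (clipped to `[0,1]`), under noise uniform on `{-1, 1}`, has regret at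
most `1/4` for every value `v₁`. -/
theorem randomized_binary_regret :
    let p : ℝ → ℝ := fun s => max 0 (min ((s + 1) / 2) 1)
    ∀ v : ℝ, max v 0 - v * ((p (v - 1) + p (v + 1)) / 2) ≤ 1 / 4 :=
  RandomizedBinary.regret_le_quarter
end

section
/- Consider the binary case where A₁ is uniform on {-1, 1}. Any deterministic algorithm Alg (a function from observed value s₁ to a choice in {1,2}) has worst-case regret at least 1/2. -/
/-- Any deterministic algorithm (picking item 1 iff `alg s = true` on observation `s`),
under noise uniform on `{-1, 1}` in the binary setting, has worst-case regret ≥ 1/2. -/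
theorem deterministic_binary_lower_bound (alg : ℝ → Bool) :
    ∃ v : ℝ, 1 / 2 ≤ max v 0 -
      v * (((if alg (v - 1) then (1 : ℝ) else 0) + (if alg (v + 1) then 1 else 0)) / 2) := by
  -- The observation `0` occurs with probability `1/2` under both `v = 1` and `v = -1`,
  -- so whichever item `alg 0` picks is wrong with probability `1/2` for one of them.
  cases h : alg 0
  · exact ⟨1, by cases alg (1 + 1) <;> norm_num [h]⟩
  · exact ⟨-1, by cases alg (-1 - 1) <;> norm_num [h]⟩
end

section
/- Let x₂ ≥ x₃ ≥ … be real numbers and a₂, …, a_n, θ₂, …, θ_n, V ∈ ℝ with V ≥ x_i for all i. Let p = argmax_{j≥2} (x_j + a_j - θ_j) and q = argmax_{j≥2} (x_j/2 + a_j - θ_j) (ties broken consistently). Then 𝟙(x_p/2 + a_p - θ_p ≥ V/2)·(V - x_p) ≤ 𝟙(x_q/2 + a_q - θ_q ≥ V/2)·(V - x_q). -/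
lemma le_of_argmax_add_of_argmax_half_add {ι : Type*} {f g : ι → ℝ} {p q : ι}
    (hp : ∀ j, f j + g j ≤ f p + g p) (hq : ∀ j, f j / 2 + g j ≤ f q / 2 + g q) :
    f q ≤ f p := by
  linarith [hp q, hq p]

lemma ite_zero_le_ite_zero {α : Type*} [Preorder α] [Zero α] {P Q : Prop}
    [Decidable P] [Decidable Q] {u v : α}
    (hPQ : P → Q) (huv : P → u ≤ v) (hv : Q → 0 ≤ v) :
    (if P then u else 0) ≤ (if Q then v else 0) := by
  split_ifs with hP hQ hQ
  · exact huv hP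
  · exact absurd (hPQ hP) hQ
  · exact hv hQ
  · exact le_rfl

/-- Pointwise inequality underlying Lemma 6.1: `p` maximizes `j ↦ x j + a j - θ j`,
`q` maximizes `j ↦ x j / 2 + a j - θ j`, and `V` bounds all the `x j`. -/
theorem argmax_swap_pointwise {ι : Type*} (x a th : ι → ℝ) (V : ℝ)
    (hV : ∀ j, x j ≤ V) (p q : ι)
    (hp : ∀ j, x j + a j - th j ≤ x p + a p - th p)
    (hq : ∀ j, x j / 2 + a j - th j ≤ x q / 2 + a q - th q) :
    (if V / 2 ≤ x p / 2 + a p - th p then V - x p else 0) ≤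
      (if V / 2 ≤ x q / 2 + a q - th q then V - x q else 0) := by
  have hxq : x q ≤ x p :=
    le_of_argmax_add_of_argmax_half_add (g := fun j => a j - th j)
      (fun j => by linarith [hp j]) (fun j => by linarith [hq j])
  exact ite_zero_le_ite_zero (fun h => h.trans (hq p))
    (fun _ => sub_le_sub_left hxq V) (fun _ => sub_nonneg.2 (hV q))
end

section
/- Let α ∈ (0, 1/2] with 1/α an integer, and let A be uniform on [-1, -1+α] ∪ [1-α, 1]. For any deterministic monotone algorithm (a nondecreasing threshold rule: pick item 1 iff s₁ ≥ τ for some τ ∈ ℝ ∪ {±∞}), the worst-case regret in the binary setting is at least (1-α)/2. -/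
open MeasureTheory Set

/-!
A monotone rule either accepts every signal `s ≥ 0` or rejects every signal `s ≤ 0`.
In the first case take `v = α - 1 < 0`: with probability `1/2` the noise lies in `[1 - α, 1]`,
so `s = v + a ≥ 0` and the bad item is picked, costing `(1 - α)/2` in expectation.
In the second case take `v = 1 - α > 0`: with probability `1/2` the noise lies in
`[-1, -1 + α]`, so `s ≤ 0` and the good item is rejected, again losing `(1 - α)/2`.
-/

theorem forall_ge_eq_true_or_forall_le_eq_false {β : Type*} [Preorder β] {f : β → Bool}
    (hf : ∀ s s', s ≤ s' → f s = true → f s' = true) (x : β) :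
    (∀ s ≥ x, f s = true) ∨ ∀ s ≤ x, f s = false := by
  by_cases hx : f x = true
  · exact Or.inl fun s hs => hf x s hs hx
  · exact Or.inr fun s hs => Bool.eq_false_iff.2 fun hs' => hx (hf s x hs hs')

noncomputable def twoIntervalNoise (α : ℝ) : Measure ℝ :=
  (ENNReal.ofReal (2 * α))⁻¹ • volume.restrict (Icc (-1) (-1 + α) ∪ Icc (1 - α) 1)

namespace twoIntervalNoise

variable {α : ℝ}

theorem isFiniteMeasure (hα : 0 < α) : IsFiniteMeasure (twoIntervalNoise α) :=
  have : IsFiniteMeasure (volume.restrict (Icc (-1) (-1 + α) ∪ Icc (1 - α) 1)) :=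
    isFiniteMeasure_restrict.2 (isCompact_Icc.union isCompact_Icc).measure_ne_top
  Measure.smul_finite _ (ENNReal.inv_ne_top.2 (ENNReal.ofReal_pos.2 (by positivity)).ne')

theorem real_Icc_right (hα : 0 < α) : (twoIntervalNoise α).real (Icc (1 - α) 1) = 1 / 2 := by
  rw [measureReal_def, twoIntervalNoise, Measure.smul_apply, smul_eq_mul,
    Measure.restrict_eq_self _ subset_union_right, Real.volume_Icc, sub_sub_cancel,
    ENNReal.toReal_mul, ENNReal.toReal_inv, ENNReal.toReal_ofReal (by positivity),
    ENNReal.toReal_ofReal hα.le]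
  field_simp

theorem real_le_of_inter_subset (hα : 0 < α) {S T : Set ℝ}
    (hST : S ∩ (Icc (-1) (-1 + α) ∪ Icc (1 - α) 1) ⊆ T) :
    (twoIntervalNoise α).real S ≤ (twoIntervalNoise α).real T := by
  have := isFiniteMeasure hα
  refine ENNReal.toReal_mono (measure_ne_top _ _) ?_
  have hU : MeasurableSet (Icc (-1) (-1 + α) ∪ Icc (1 - α) 1) :=
    measurableSet_Icc.union measurableSet_Icc
  simp only [twoIntervalNoise, Measure.smul_apply, smul_eq_mul,
    Measure.restrict_apply' hU]
  gcongr _ * ?_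
  exact measure_mono <| subset_inter hST inter_subset_right

end twoIntervalNoise

theorem monotone_lower_bound_general (α : ℝ) (hα0 : 0 < α) (hα2 : α ≤ 1 / 2)
    (alg : ℝ → Bool)
    (hmono : ∀ s s' : ℝ, s ≤ s' → alg s = true → alg s' = true) :
    let μ : Measure ℝ :=
      (ENNReal.ofReal (2 * α))⁻¹ • volume.restrict (Icc (-1) (-1 + α) ∪ Icc (1 - α) 1)
    ∃ v : ℝ, (1 - α) / 2 ≤ max v 0 - v * (μ {a | alg (v + a) = true}).toReal := by
  show ∃ v : ℝ, (1 - α) / 2 ≤ max v 0 - v * (twoIntervalNoise α).real {a | alg (v + a) = true}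
  have := twoIntervalNoise.isFiniteMeasure hα0
  rcases forall_ge_eq_true_or_forall_le_eq_false hmono 0 with hacc | hrej
  · refine ⟨α - 1, ?_⟩
    have hP : 1 / 2 ≤ (twoIntervalNoise α).real {a | alg (α - 1 + a) = true} :=
      twoIntervalNoise.real_Icc_right hα0 ▸
        measureReal_mono fun a ha => hacc _ (by linarith [ha.1])
    rw [max_eq_right (by linarith)]
    nlinarith
  · refine ⟨1 - α, ?_⟩
    have hsub : {a | alg (1 - α + a) = true} ∩ (Icc (-1) (-1 + α) ∪ Icc (1 - α) 1) ⊆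
        Icc (1 - α) 1 := by
      rintro a ⟨ha, hl | hr⟩
      · simp [hrej (1 - α + a) (by linarith [hl.2])] at ha
      · exact hr
    have hP : (twoIntervalNoise α).real {a | alg (1 - α + a) = true} ≤ 1 / 2 :=
      twoIntervalNoise.real_Icc_right hα0 ▸ twoIntervalNoise.real_le_of_inter_subset hα0 hsub
    rw [max_eq_left (by linarith)]
    nlinarith

/-- In the binary setting with noise uniform on `[-1,-1+α] ∪ [1-α,1]`, any deterministic
monotone algorithm has worst-case regret at least `(1-α)/2`. -/
theorem monotone_lower_bound (α : ℝ) (hα0 : 0 < α) (hα2 : α ≤ 1 / 2)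
    (hint : ∃ n : ℕ, (n : ℝ) = 1 / α)
    (alg : ℝ → Bool)
    (hmono : ∀ s s' : ℝ, s ≤ s' → alg s = true → alg s' = true) :
    let μ : Measure ℝ :=
      (ENNReal.ofReal (2 * α))⁻¹ • volume.restrict (Icc (-1) (-1 + α) ∪ Icc (1 - α) 1)
    ∃ v : ℝ, (1 - α) / 2 ≤ max v 0 - v * (μ {a | alg (v + a) = true}).toReal :=
  monotone_lower_bound_general α hα0 hα2 alg hmono
end
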